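/- Let k ≥ 2 and a be integers with k ∤ a, let m < n be integers, let q ≥ 1 be an integer, and let g : ℝ → ℂ be q times continuously differentiable on [mk, nk]. Then ∑_{r=mk+1}^{nk} e^{2πiar/k} g(r) = ∑_{l=1}^{q} ((−1)^l C_{l,k}(a) k^{l−1}/l!) · [g^{(l−1)}(kn) − g^{(l−1)}(km)] + ((−1)^{q+1} k^{q−1}/q!) ∫_{km}^{kn} C̃_{q,k}(x/k;a) g^{(q)}(x) dx. -/

import Mathlib

open scoped BigOperators

/-- The Bernoulli polynomial `B_n` evaluated at a complex number (convention `B_1(x) = x - 1/2`). -/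
noncomputable def Bpoly (n : ℕ) (x : ℂ) : ℂ :=
  Polynomial.aeval x (Polynomial.bernoulli n)

/-- The periodic Bernoulli function `B̃_n(x) = B_n(x − ⌊x⌋)`. -/
noncomputable def Bper (n : ℕ) (x : ℝ) : ℂ :=
  Bpoly n ((Int.fract x : ℝ) : ℂ)

/-- `C̃_{n,k}(x;a) = ∑_{l=0}^{k−1} B̃_n(x − l/k) e^{2πial/k}`. -/
noncomputable def Cper (n k : ℕ) (a : ℤ) (x : ℝ) : ℂ :=
  ∑ l ∈ Finset.range k,
    Bper n (x - (l : ℝ) / k) * Complex.exp (2 * (Real.pi : ℂ) * Complex.I * a * l / k)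

/-- `C_{n,k}(a) := C̃_{n,k}(0;a)`. -/
noncomputable def Cnum (n k : ℕ) (a : ℤ) : ℂ := Cper n k a 0

noncomputable def eterm (k : ℕ) (a t : ℤ) : ℂ :=
  Complex.exp (2 * (Real.pi : ℂ) * Complex.I * a * t / k)

lemma Cper_eq (n k : ℕ) (a : ℤ) (x : ℝ) :
    Cper n k a x = ∑ l ∈ Finset.range k, Bper n (x - (l : ℝ) / k) * eterm k a l := by
  unfold Cper eterm
  refine Finset.sum_congr rfl fun l _ => ?_
  push_cast
  ring_nf

lemma hasDerivAt_Bpoly (n : ℕ) (z : ℂ) :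
    HasDerivAt (Bpoly n) ((n : ℂ) * Bpoly (n - 1) z) z := by
  have h := Polynomial.hasDerivAt_aeval (q := Polynomial.bernoulli n) (𝕜 := ℂ) z
  rw [Polynomial.derivative_bernoulli] at h
  change HasDerivAt (fun x => Polynomial.aeval x (Polynomial.bernoulli n)) _ z
  simpa [Bpoly, mul_comm] using h

lemma Bpoly_one (n : ℕ) (hn : n ≠ 1) : Bpoly n 1 = Bpoly n 0 := by
  unfold Bpoly
  rw [Polynomial.aeval_def, Polynomial.aeval_def, Polynomial.eval₂_eq_eval_map,
    Polynomial.eval₂_eq_eval_map, Polynomial.eval_one_map, Polynomial.eval_zero_map,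
    Polynomial.bernoulli_eval_one, Polynomial.bernoulli_eval_zero,
    bernoulli_eq_bernoulli'_of_ne_one hn]

lemma eterm_eq_of_dvd {k : ℕ} (hk : 2 ≤ k) (a : ℤ) {l r : ℤ} (h : (k : ℤ) ∣ (r - l)) :
    eterm k a l = eterm k a r := by
  obtain ⟨c, hc⟩ := h
  have hr : r = l + k * c := by linarith
  have hk0 : (k : ℂ) ≠ 0 := Nat.cast_ne_zero.mpr (by omega)
  unfold eterm
  subst hr
  push_cast
  rw [show 2 * (Real.pi : ℂ) * Complex.I * a * ((l : ℂ) + k * c) / k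
      = 2 * (Real.pi : ℂ) * Complex.I * a * l / k + (a * c) * (2 * Real.pi * Complex.I) by
    field_simp]
  rw [Complex.exp_add, show ((a:ℂ) * c) = ((a * c : ℤ) : ℂ) by push_cast; ring,
    Complex.exp_int_mul_two_pi_mul_I, mul_one]

lemma sum_eterm (k : ℕ) (hk : 2 ≤ k) (a : ℤ) (hka : ¬ (k : ℤ) ∣ a) :
    ∑ l ∈ Finset.range k, eterm k a l = 0 := by
  have hk0 : (k : ℂ) ≠ 0 := Nat.cast_ne_zero.mpr (by omega)
  set z : ℂ := Complex.exp (2 * (Real.pi : ℂ) * Complex.I * a / k) with hz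
  have hterm : ∀ l : ℕ, l ∈ Finset.range k → eterm k a l = z ^ l := by
    intro l _
    rw [hz, ← Complex.exp_nat_mul]
    unfold eterm
    congr 1
    push_cast
    ring
  rw [Finset.sum_congr rfl hterm]
  have hz1 : z ≠ 1 := by
    intro hcon
    rw [hz, Complex.exp_eq_one_iff] at hcon
    obtain ⟨c, hc⟩ := hcon
    apply hka
    refine ⟨c, ?_⟩
    have h2 : (2 * (Real.pi : ℂ) * Complex.I) ≠ 0 := by
      simp [Real.pi_ne_zero, Complex.I_ne_zero]
    have h3 : (a : ℂ) = k * c := by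
      field_simp at hc
      have h2' : (2 * (Real.pi : ℂ) * Complex.I) * a
          = (2 * (Real.pi : ℂ) * Complex.I) * (k * c) := by rw [hc]
      exact mul_left_cancel₀ h2 h2'
    exact_mod_cast h3
  have hzk : z ^ k = 1 := by
    rw [hz, ← Complex.exp_nat_mul]
    rw [show (k : ℂ) * (2 * (Real.pi : ℂ) * Complex.I * a / k) = a * (2 * Real.pi * Complex.I) by
      field_simp]
    exact Complex.exp_int_mul_two_pi_mul_I a
  have hgeom := geom_sum_eq hz1 k
  rw [hgeom, hzk]
  simp

lemma floor_int_div_nat (t : ℤ) (k : ℕ) : ⌊(t : ℝ) / (k : ℝ)⌋ = t / (k : ℤ) := by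
  rw [show (t : ℝ) / (k : ℝ) = ((t / k : ℚ) : ℝ) by push_cast; ring, Rat.floor_cast,
    Rat.floor_intCast_div_natCast]

lemma fract_int_div_nat {k : ℕ} (hk : 0 < k) (t : ℤ) :
    Int.fract ((t : ℝ) / (k : ℝ)) = ((t % k : ℤ) : ℝ) / k := by
  have hk0 : (k : ℝ) ≠ 0 := Nat.cast_ne_zero.mpr hk.ne'
  rw [Int.fract, floor_int_div_nat, Int.emod_def]
  push_cast
  field_simp

lemma ediv_of_decomp {k q s : ℤ} (hk : 0 < k) (h0 : 0 ≤ s) (h1 : s < k) : (s + k * q) / k = q := by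
  rw [Int.add_mul_ediv_left _ _ (ne_of_gt hk), Int.ediv_eq_zero_of_lt h0 h1, zero_add]

lemma floor_const_on {k : ℕ} (hk : 0 < k) (r l : ℤ) {x : ℝ} (hx1 : ((r : ℝ) - 1) ≤ x)
    (hx2 : x < r) : ⌊(x - l) / k⌋ = (r - 1 - l) / (k : ℤ) := by
  have hk0 : (0 : ℝ) < (k : ℝ) := by exact_mod_cast hk
  have hkz : (k : ℤ) ≠ 0 := by exact_mod_cast hk.ne'
  set d : ℤ := (r - 1 - l) / (k : ℤ) with hd
  have hmod1 : 0 ≤ (r - 1 - l) % k := Int.emod_nonneg _ hkz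
  have hmod2 : (r - 1 - l) % k < k := Int.emod_lt_of_pos _ (by exact_mod_cast hk)
  have hdec : (k : ℤ) * d + (r - 1 - l) % k = r - 1 - l := Int.mul_ediv_add_emod _ _
  rw [Int.floor_eq_iff]
  constructor
  · rw [le_div_iff₀ hk0]
    have h1 : ((k : ℝ)) * d ≤ (r : ℝ) - 1 - l := by
      have : (k : ℤ) * d ≤ r - 1 - l := by omega
      exact_mod_cast this
    linarith
  · rw [div_lt_iff₀ hk0]
    have h2 : (r : ℝ) - l ≤ ((d : ℝ) + 1) * k := by
      have : r - l ≤ (d + 1) * k := by nlinarith [hmod2, hdec]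
      exact_mod_cast this
    linarith

/-- local polynomial model for `Cper n k a (x/k)` on the interval `[r-1, r)`. -/
noncomputable def Fa (k : ℕ) (a : ℤ) (r : ℤ) (n : ℕ) (x : ℝ) : ℂ :=
  ∑ l ∈ Finset.range k,
    Bpoly n ((((x - (l : ℝ)) / k - ((r - 1 - (l : ℤ)) / (k : ℤ) : ℤ) : ℝ) : ℂ)) * eterm k a l

lemma Cper_eq_Fa {k : ℕ} (hk : 0 < k) (a : ℤ) (r : ℤ) (n : ℕ) {x : ℝ}
    (hx1 : ((r : ℝ) - 1) ≤ x) (hx2 : x < r) : Cper n k a (x / k) = Fa k a r n x := by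
  have hk0 : (k : ℝ) ≠ 0 := Nat.cast_ne_zero.mpr hk.ne'
  rw [Cper_eq]
  unfold Fa
  refine Finset.sum_congr rfl fun l _ => ?_
  congr 2
  unfold Bper
  have harg : x / k - (l : ℝ) / k = (x - l) / k := by field_simp
  rw [harg]
  congr 1
  have hfl : ⌊(x - (l : ℝ)) / (k : ℝ)⌋ = (r - 1 - (l : ℤ)) / (k : ℤ) := by
    have h := floor_const_on hk r (l : ℤ) hx1 hx2
    simpa using h
  rw [Int.fract, hfl]

lemma Cper_eq_Fa_right {k : ℕ} (hk : 0 < k) (a : ℤ) (r : ℤ) (n : ℕ) (hn : n ≠ 1) :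
    Cper n k a ((r : ℝ) / k) = Fa k a r n r := by
  have hk0 : (k : ℝ) ≠ 0 := Nat.cast_ne_zero.mpr hk.ne'
  have hkz : (0 : ℤ) < k := by exact_mod_cast hk
  have hkz' : ((k : ℤ)) ≠ 0 := Int.natCast_ne_zero.mpr hk.ne'
  rw [Cper_eq]
  unfold Fa
  refine Finset.sum_congr rfl fun l _ => ?_
  congr 1
  unfold Bper
  have harg : (r : ℝ) / k - (l : ℝ) / k = ((r - l : ℤ) : ℝ) / k := by push_cast; field_simp
  rw [harg, fract_int_div_nat hk]
  by_cases hdvd : (k : ℤ) ∣ (r - l)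
  · obtain ⟨c, hc⟩ := hdvd
    have hmod : (r - l) % (k : ℤ) = 0 := by rw [hc]; exact Int.mul_emod_right _ _
    have hdiv : (r - 1 - (l : ℤ)) / (k : ℤ) = c - 1 := by
      have he : r - 1 - (l : ℤ) = (k - 1) + k * (c - 1) := by linarith
      rw [he, ediv_of_decomp hkz (by omega) (by omega)]
    have h1 : (((r - l) % (k : ℤ) : ℤ) : ℝ) / k = 0 := by rw [hmod]; simp
    have h2 : ((r : ℝ) - (l : ℕ)) / k - ((r - 1 - (l : ℤ)) / (k : ℤ) : ℤ) = 1 := by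
      rw [hdiv]
      have hcr : (r : ℝ) - (l : ℕ) = (k : ℝ) * c := by
        exact_mod_cast congrArg (fun z : ℤ => (z : ℝ)) hc
      rw [hcr]
      push_cast
      field_simp
      ring
    rw [h1, h2]
    simpa using (Bpoly_one n hn).symm
  · set s : ℤ := (r - l) % (k : ℤ) with hs
    set c : ℤ := (r - l) / (k : ℤ) with hcq
    have hdm := Int.mul_ediv_add_emod (r - l) (k : ℤ)
    have hdec : (r - l : ℤ) = s + k * c := by rw [hs, hcq]; linarith
    have hs0 : 0 < s := by
      rcases (Int.emod_nonneg (r - l) hkz').lt_or_eq with h | h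
      · exact h
      · exact absurd (Int.dvd_of_emod_eq_zero h.symm) hdvd
    have hsk : s < k := Int.emod_lt_of_pos _ hkz
    have hdiv : (r - 1 - (l : ℤ)) / (k : ℤ) = c := by
      have he : r - 1 - (l : ℤ) = (s - 1) + k * c := by linarith
      rw [he, ediv_of_decomp hkz (by omega) (by omega)]
    have h2 : ((r : ℝ) - (l : ℕ)) / k - ((r - 1 - (l : ℤ)) / (k : ℤ) : ℤ)
        = ((s : ℝ)) / k := by
      rw [hdiv]
      have hcr : (r : ℝ) - (l : ℕ) = (s : ℝ) + (k : ℝ) * c := by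
        exact_mod_cast congrArg (fun z : ℤ => (z : ℝ)) hdec
      rw [hcr]
      field_simp
      ring
    rw [h2]

lemma Bpoly_one_eval (z : ℂ) : Bpoly 1 z = z - 1/2 := by
  simp [Bpoly, Polynomial.bernoulli, Finset.sum_range_succ, bernoulli_one, bernoulli_zero]
  ring

lemma Bpoly_zero_eval (z : ℂ) : Bpoly 0 z = 1 := by
  simp [Bpoly, Polynomial.bernoulli_zero]

lemma hasDerivAt_Fa {k : ℕ} (hk : 0 < k) (a : ℤ) (r : ℤ) (n : ℕ) (x : ℝ) :
    HasDerivAt (Fa k a r n) (((n : ℂ) / k) * Fa k a r (n - 1) x) x := by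
  have hk0 : (k : ℂ) ≠ 0 := Nat.cast_ne_zero.mpr hk.ne'
  have hterm : ∀ l ∈ Finset.range k, HasDerivAt
      (fun y : ℝ => Bpoly n ((((y - (l : ℝ)) / k - ((r - 1 - (l : ℤ)) / (k : ℤ) : ℤ) : ℝ) : ℂ))
        * eterm k a l)
      (((n : ℂ) * Bpoly (n - 1)
          ((((x - (l : ℝ)) / k - ((r - 1 - (l : ℤ)) / (k : ℤ) : ℤ) : ℝ) : ℂ)) * (1 / k))
        * eterm k a l) x := by
    intro l _
    set d : ℂ := (((r - 1 - (l : ℤ)) / (k : ℤ) : ℤ) : ℂ)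
    have hfun : ∀ y : ℝ, (((y - (l : ℝ)) / k - ((r - 1 - (l : ℤ)) / (k : ℤ) : ℤ) : ℝ) : ℂ)
        = ((y : ℂ) - l) / k - d := by
      intro y; push_cast; ring
    simp only [hfun]
    have hinner : ∀ z : ℂ, HasDerivAt (fun z : ℂ => (z - l) / k - d) (1 / k) z := by
      intro z
      simpa using (((hasDerivAt_id z).sub_const (l : ℂ)).div_const (k : ℂ)).sub_const d
    have hcomp : HasDerivAt (fun z : ℂ => Bpoly n ((z - l) / k - d))
        ((n : ℂ) * Bpoly (n - 1) (((x : ℂ) - l) / k - d) * (1 / k)) (x : ℝ) := by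
      exact (hasDerivAt_Bpoly n _).comp _ (hinner _)
    exact (hcomp.comp_ofReal).mul_const _
  have hsum := HasDerivAt.sum hterm
  have heq : (∑ l ∈ Finset.range k, ((n : ℂ) * Bpoly (n - 1)
      ((((x - (l : ℝ)) / k - ((r - 1 - (l : ℤ)) / (k : ℤ) : ℤ) : ℝ) : ℂ)) * (1 / k))
        * eterm k a l) = ((n : ℂ) / k) * Fa k a r (n - 1) x := by
    rw [Fa, Finset.mul_sum]
    refine Finset.sum_congr rfl fun l _ => ?_
    ring
  rw [heq] at hsum
  rw [show Fa k a r n = ∑ l ∈ Finset.range k, fun y : ℝ =>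
      Bpoly n ((((y - (l : ℝ)) / k - ((r - 1 - (l : ℤ)) / (k : ℤ) : ℤ) : ℝ) : ℂ)) * eterm k a l by
    ext y; simp only [Fa, Finset.sum_apply]]
  exact hsum

lemma continuous_Fa {k : ℕ} (hk : 0 < k) (a : ℤ) (r : ℤ) (n : ℕ) :
    Continuous (Fa k a r n) :=
  continuous_iff_continuousAt.mpr fun x => (hasDerivAt_Fa hk a r n x).differentiableAt.continuousAt

lemma Fa_zero_eq {k : ℕ} (hk : 2 ≤ k) {a : ℤ} (hka : ¬ (k : ℤ) ∣ a) (r : ℤ) (x : ℝ) :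
    Fa k a r 0 x = 0 := by
  rw [Fa]
  simp only [Bpoly_zero_eval, one_mul]
  exact sum_eterm k hk a hka

lemma Fa_one_const {k : ℕ} (hk : 2 ≤ k) {a : ℤ} (hka : ¬ (k : ℤ) ∣ a) (r : ℤ) (x y : ℝ) :
    Fa k a r 1 x = Fa k a r 1 y := by
  have hk0 : 0 < k := by omega
  apply is_const_of_deriv_eq_zero
  · exact fun z => (hasDerivAt_Fa hk0 a r 1 z).differentiableAt
  · intro z
    have h := (hasDerivAt_Fa hk0 a r 1 z)
    rw [h.deriv]
    simp [Fa_zero_eq hk hka]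

lemma Cper_int_eq (n k : ℕ) (a : ℤ) (j : ℤ) : Cper n k a ((j : ℝ)) = Cper n k a 0 := by
  rw [Cper_eq, Cper_eq]
  refine Finset.sum_congr rfl fun l _ => ?_
  congr 1
  unfold Bper
  congr 2
  rw [zero_sub, show (j : ℝ) - (l : ℝ) / k = -((l : ℝ) / k) + (j : ℝ) by ring,
    Int.fract_add_intCast]

lemma dvd_iff_toNat {k : ℕ} (hk : 0 < k) (r : ℤ) (l : ℕ) (hl : l < k) :
    (k : ℤ) ∣ (r - l) ↔ l = (r % (k : ℤ)).toNat := by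
  have hkz : ((k : ℤ)) ≠ 0 := Int.natCast_ne_zero.mpr hk.ne'
  have hkzp : (0 : ℤ) < k := by exact_mod_cast hk
  have hm0 : 0 ≤ r % (k : ℤ) := Int.emod_nonneg r hkz
  have hmk : r % (k : ℤ) < k := Int.emod_lt_of_pos r hkzp
  have hrr : r - r % (k : ℤ) = k * (r / k) := by
    have := Int.mul_ediv_add_emod r (k : ℤ); linarith
  constructor
  · rintro ⟨c, hc⟩
    have hdiff : r % (k : ℤ) - l = k * (c - r / k) := by
      have h' : (k : ℤ) * (c - r / k) = k * c - k * (r / k) := by ring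
      linarith [hc, hrr, h']
    set c' := c - r / k with hc'
    have hb1 : (k : ℤ) * c' < k * 1 := by
      rw [← hdiff, mul_one]; omega
    have hb2 : (k : ℤ) * (-1) < k * c' := by
      rw [← hdiff]; nlinarith
    have hc1 : c' < 1 := lt_of_mul_lt_mul_left hb1 (by positivity)
    have hc2 : (-1 : ℤ) < c' := lt_of_mul_lt_mul_left hb2 (by positivity)
    have hcz : c' = 0 := by omega
    rw [hcz, mul_zero] at hdiff
    omega
  · intro h
    have hlr : (l : ℤ) = r % k := by omega
    rw [hlr]
    exact ⟨r / k, by linarith⟩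

lemma sum_delta_eterm {k : ℕ} (hk : 2 ≤ k) (a : ℤ) (r : ℤ) :
    ∑ l ∈ Finset.range k, (if (k : ℤ) ∣ (r - l) then (1 : ℂ) else 0) * eterm k a l
      = eterm k a r := by
  have hk0 : 0 < k := by omega
  have hkzp : (0 : ℤ) < k := by exact_mod_cast hk0
  have hcongr : ∀ l ∈ Finset.range k,
      (if (k : ℤ) ∣ (r - l) then (1 : ℂ) else 0) * eterm k a l
        = if l = (r % (k : ℤ)).toNat then eterm k a r else 0 := by
    intro l hl
    rw [Finset.mem_range] at hl
    by_cases h : (k : ℤ) ∣ (r - l)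
    · rw [if_pos h, if_pos ((dvd_iff_toNat hk0 r l hl).mp h), one_mul,
        eterm_eq_of_dvd hk a h]
    · rw [if_neg h, if_neg (fun hc => h ((dvd_iff_toNat hk0 r l hl).mpr hc)), zero_mul]
  rw [Finset.sum_congr rfl hcongr, Finset.sum_ite_eq' (Finset.range k)]
  rw [if_pos]
  rw [Finset.mem_range]
  have hm0 : 0 ≤ r % (k : ℤ) := Int.emod_nonneg r (by exact_mod_cast hk0.ne')
  have hmk : r % (k : ℤ) < k := Int.emod_lt_of_pos r hkzp
  omega

lemma Cper_one_jump {k : ℕ} (hk : 2 ≤ k) {a : ℤ} (hka : ¬ (k : ℤ) ∣ a) (r : ℤ) :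
    Cper 1 k a ((r : ℝ) / k) = Cper 1 k a (((r - 1 : ℤ) : ℝ) / k) - eterm k a r := by
  have hk0 : 0 < k := by omega
  have hkR : (k : ℝ) ≠ 0 := Nat.cast_ne_zero.mpr hk0.ne'
  have hkC : (k : ℂ) ≠ 0 := Nat.cast_ne_zero.mpr hk0.ne'
  have hkzp : (0 : ℤ) < k := by exact_mod_cast hk0
  have hkz : ((k : ℤ)) ≠ 0 := Int.natCast_ne_zero.mpr hk0.ne'
  have key : ∀ l ∈ Finset.range k,
      Bper 1 ((r : ℝ) / k - (l : ℝ) / k)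
        = Bper 1 ((((r - 1 : ℤ)) : ℝ) / k - (l : ℝ) / k) + 1 / (k : ℂ)
          - (if (k : ℤ) ∣ (r - l) then (k : ℂ) else 0) / k := by
    intro l _
    have e1 : (r : ℝ) / k - (l : ℝ) / k = (((r - l : ℤ)) : ℝ) / k := by push_cast; ring
    have e2 : (((r - 1 : ℤ)) : ℝ) / k - (l : ℝ) / k = (((r - 1 - l : ℤ)) : ℝ) / k := by
      push_cast; ring
    rw [e1, e2]
    unfold Bper
    rw [fract_int_div_nat hk0, fract_int_div_nat hk0, Bpoly_one_eval, Bpoly_one_eval]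
    have hmod : ((r - l) % (k : ℤ))
        = (r - 1 - l) % k + 1 - (if (k : ℤ) ∣ (r - l) then (k : ℤ) else 0) := by
      set t : ℤ := r - 1 - l with ht
      have h1k : (1 : ℤ) % k = 1 := Int.emod_eq_of_lt (by omega) (by omega)
      have hadd : (t + 1) % k = (t % k + 1) % k := by
        rw [Int.add_emod, h1k]
      have hts : 0 ≤ t % k := Int.emod_nonneg t hkz
      have htk : t % k < k := Int.emod_lt_of_pos t hkzp
      have hrl : r - l = t + 1 := by omega
      by_cases hdvd : (k : ℤ) ∣ (r - l)
      · rw [if_pos hdvd]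
        have hz : (r - l) % k = 0 := Int.emod_eq_zero_of_dvd hdvd
        have hkk : t % k = k - 1 := by
          rcases hdvd with ⟨c, hc⟩
          have hh : (k : ℤ) * (c - 1) = k * c - k := by ring
          have htc : t = (k - 1) + k * (c - 1) := by
            rw [ht]; linarith [hc, hh]
          rw [htc, Int.add_mul_emod_self_left, Int.emod_eq_of_lt (by omega) (by omega)]
        omega
      · rw [if_neg hdvd]
        have hne : (r - l) % k ≠ 0 := fun hc => hdvd (Int.dvd_of_emod_eq_zero hc)
        have hcase : t % k + 1 < k ∨ t % k + 1 = k := by omega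
        rcases hcase with h | h
        · rw [hrl, hadd, Int.emod_eq_of_lt (by omega) h]
          omega
        · exfalso
          apply hne
          rw [hrl, hadd, h]
          simp
    have hmodR : (((r - l) % (k : ℤ) : ℤ) : ℝ)
        = (((r - 1 - l) % (k : ℤ) : ℤ) : ℝ) + 1
          - (if (k : ℤ) ∣ (r - l) then (k : ℝ) else 0) := by
      rcases Classical.em ((k : ℤ) ∣ (r - l)) with h | h
      · rw [if_pos h]; rw [if_pos h] at hmod
        exact_mod_cast congrArg (fun z : ℤ => (z : ℝ)) hmod
      · rw [if_neg h]; rw [if_neg h] at hmod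
        exact_mod_cast congrArg (fun z : ℤ => (z : ℝ)) hmod
    push_cast [hmodR]
    rcases Classical.em ((k : ℤ) ∣ (r - l)) with h | h
    · rw [if_pos h, if_pos h]; field_simp; push_cast; ring
    · rw [if_neg h, if_neg h]; field_simp; push_cast; ring
  have expand : ∀ l ∈ Finset.range k,
      (Bper 1 ((((r - 1 : ℤ)) : ℝ) / k - (l : ℝ) / k) + 1 / (k : ℂ)
        - (if (k : ℤ) ∣ (r - l) then (k : ℂ) else 0) / k) * eterm k a l
      = Bper 1 ((((r - 1 : ℤ)) : ℝ) / k - (l : ℝ) / k) * eterm k a l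
        + (1 / (k : ℂ)) * eterm k a l
        - (if (k : ℤ) ∣ (r - l) then (1 : ℂ) else 0) * eterm k a l := by
    intro l _
    rcases Classical.em ((k : ℤ) ∣ (r - l)) with h | h
    · rw [if_pos h, if_pos h]; field_simp
    · rw [if_neg h, if_neg h]; ring
  rw [Cper_eq, Cper_eq]
  calc ∑ l ∈ Finset.range k, Bper 1 ((r : ℝ) / k - (l : ℝ) / k) * eterm k a l
      = ∑ l ∈ Finset.range k,
          (Bper 1 ((((r - 1 : ℤ)) : ℝ) / k - (l : ℝ) / k) * eterm k a l
            + (1 / (k : ℂ)) * eterm k a l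
            - (if (k : ℤ) ∣ (r - l) then (1 : ℂ) else 0) * eterm k a l) :=
        Finset.sum_congr rfl (fun l hl => by rw [key l hl]; exact expand l hl)
    _ = ∑ l ∈ Finset.range k, Bper 1 ((((r - 1 : ℤ)) : ℝ) / k - (l : ℝ) / k) * eterm k a l
          - eterm k a r := by
        rw [Finset.sum_sub_distrib, Finset.sum_add_distrib, ← Finset.mul_sum,
          sum_eterm k hk a hka, mul_zero, add_zero, sum_delta_eterm hk a r]

lemma abel_sum (u gs : ℕ → ℂ) (M : ℕ) :
    ∑ i ∈ Finset.range M, u i * (gs (i + 1) - gs i)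
      = u M * gs M - u 0 * gs 0 - ∑ i ∈ Finset.range M, (u (i + 1) - u i) * gs (i + 1) := by
  induction M with
  | zero => simp
  | succ M ih =>
    rw [Finset.sum_range_succ, Finset.sum_range_succ, ih]
    ring

lemma sum_Icc_int (f : ℤ → ℂ) (c : ℤ) (N : ℕ) :
    ∑ r ∈ Finset.Icc (c + 1) (c + N), f r = ∑ i ∈ Finset.range N, f (c + 1 + i) := by
  induction N with
  | zero =>
    simp [Finset.Icc_eq_empty_of_lt]
  | succ N ih =>
    have hins : Finset.Icc (c + 1) (c + (N + 1 : ℕ))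
        = insert (c + (N : ℕ) + 1) (Finset.Icc (c + 1) (c + N)) := by
      ext x
      simp only [Finset.mem_Icc, Finset.mem_insert]
      push_cast
      omega
    rw [hins, Finset.sum_insert (by simp [Finset.mem_Icc]), ih,
      Finset.sum_range_succ]
    push_cast
    ring_nf
open MeasureTheory in
lemma ae_ne_real (d : ℝ) : ∀ᵐ x ∂(volume : Measure ℝ), x ≠ d := by
  have h0 : (volume : Measure ℝ) {d} = 0 := measure_singleton d
  rw [MeasureTheory.ae_iff]
  simpa using h0

open MeasureTheory in
lemma intervalIntegral_congr_Ico {f h : ℝ → ℂ} {c d : ℝ} (hcd : c ≤ d)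
    (heq : ∀ x ∈ Set.Ico c d, f x = h x) :
    ∫ x in c..d, f x = ∫ x in c..d, h x := by
  apply intervalIntegral.integral_congr_ae
  filter_upwards [ae_ne_real d] with x hx hxI
  rw [Set.uIoc_of_le hcd] at hxI
  exact heq x ⟨le_of_lt hxI.1, lt_of_le_of_ne hxI.2 hx⟩

open MeasureTheory in
lemma intervalIntegrable_congr_Ico {f h : ℝ → ℂ} {c d : ℝ} (hcd : c ≤ d)
    (heq : ∀ x ∈ Set.Ico c d, f x = h x)
    (hi : IntervalIntegrable f volume c d) :
    IntervalIntegrable h volume c d := by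
  rw [intervalIntegrable_iff_integrableOn_Ioc_of_le hcd] at hi ⊢
  apply hi.congr
  filter_upwards [MeasureTheory.ae_restrict_of_ae (ae_ne_real d),
    MeasureTheory.ae_restrict_mem measurableSet_Ioc] with x hx hxI
  exact heq x ⟨le_of_lt hxI.1, lt_of_le_of_ne hxI.2 hx⟩
theorem aux_main (k : ℕ) (hk : 2 ≤ k) (a : ℤ) (hka : ¬ (k : ℤ) ∣ a) (A B : ℤ)
    (hAB : A < B) (hA : (k : ℤ) ∣ A) (hB : (k : ℤ) ∣ B) (q : ℕ) (hq : 1 ≤ q)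
    (g : ℝ → ℂ) (hg : ContDiffOn ℝ q g (Set.Icc (A : ℝ) (B : ℝ))) :
    (∑ r ∈ Finset.Icc (A + 1) B, eterm k a r * g (r : ℝ)) =
      (∑ l ∈ Finset.Icc 1 q,
          ((-1 : ℂ) ^ l * Cnum l k a * (k : ℂ) ^ (l - 1) / (l.factorial : ℂ)) *
            (iteratedDerivWithin (l - 1) g (Set.Icc (A : ℝ) (B : ℝ)) (B : ℝ)
              - iteratedDerivWithin (l - 1) g (Set.Icc (A : ℝ) (B : ℝ)) (A : ℝ))) +
        ((-1 : ℂ) ^ (q + 1) * (k : ℂ) ^ (q - 1) / (q.factorial : ℂ)) *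
          ∫ x in (A : ℝ)..(B : ℝ),
            Cper q k a (x / k) * iteratedDerivWithin q g (Set.Icc (A : ℝ) (B : ℝ)) x := by
  classical
  have hk0 : 0 < k := by omega
  have hkR0 : (0 : ℝ) < (k : ℝ) := by exact_mod_cast hk0
  have hkRne : (k : ℝ) ≠ 0 := hkR0.ne'
  have hkC : (k : ℂ) ≠ 0 := Nat.cast_ne_zero.mpr hk0.ne'
  have hABR : (A : ℝ) < (B : ℝ) := by exact_mod_cast hAB
  set s : Set ℝ := Set.Icc (A : ℝ) (B : ℝ) with hs
  set G : ℕ → ℝ → ℂ := fun p => iteratedDerivWithin p g s with hGdef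
  set N : ℕ := (B - A).toNat with hNdef
  have hN : (N : ℤ) = B - A := Int.toNat_of_nonneg (by omega)
  have hN1 : 1 ≤ N := by omega
  set aseq : ℕ → ℝ := fun i => (A : ℝ) + i with haseq
  have haseq0 : aseq 0 = (A : ℝ) := by simp [haseq]
  have haseqN : aseq N = (B : ℝ) := by
    have hcast : ((N : ℤ) : ℝ) = (B : ℝ) - (A : ℝ) := by exact_mod_cast congrArg (fun z : ℤ => (z : ℝ)) hN
    simp only [haseq]
    push_cast at hcast ⊢
    linarith
  have hle : ∀ i : ℕ, aseq i ≤ aseq (i + 1) := by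
    intro i; simp only [haseq]; push_cast; linarith
  have hlt : ∀ i : ℕ, aseq i < aseq (i + 1) := by
    intro i; simp only [haseq]; push_cast; linarith
  have hIccsub : ∀ i, i < N → Set.Icc (aseq i) (aseq (i + 1)) ⊆ s := by
    intro i hi
    apply Set.Icc_subset_Icc
    · simp only [haseq]; push_cast; linarith [Nat.cast_nonneg (α := ℝ) i]
    · simp only [haseq, ← haseqN]
      push_cast
      have : (i : ℝ) + 1 ≤ (N : ℝ) := by exact_mod_cast hi
      linarith
  have hIoosub : ∀ i, i < N → Set.Ioo (aseq i) (aseq (i + 1)) ⊆ Set.Ioo (A : ℝ) (B : ℝ) := by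
    intro i hi
    apply Set.Ioo_subset_Ioo
    · simp only [haseq]; push_cast; linarith [Nat.cast_nonneg (α := ℝ) i]
    · simp only [haseq, ← haseqN]
      push_cast
      have : (i : ℝ) + 1 ≤ (N : ℝ) := by exact_mod_cast hi
      linarith
  have hUD : UniqueDiffOn ℝ s := uniqueDiffOn_Icc hABR
  have hGcont : ∀ p : ℕ, p ≤ q → ContinuousOn (G p) s := fun p hp =>
    hg.continuousOn_iteratedDerivWithin (by exact_mod_cast hp) hUD
  have hG0 : G 0 = g := iteratedDerivWithin_zero
  have hGderiv : ∀ p : ℕ, p < q → ∀ x ∈ Set.Ioo (A : ℝ) (B : ℝ),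
      HasDerivAt (G p) (G (p + 1) x) x := by
    intro p hp x hx
    have hxs : x ∈ s := Set.Ioo_subset_Icc_self hx
    have hdiff : DifferentiableWithinAt ℝ (G p) s x :=
      (hg.differentiableOn_iteratedDerivWithin (by exact_mod_cast hp) hUD) x hxs
    have h1 : HasDerivWithinAt (G p) (G (p + 1) x) s x := by
      have hstep' : G (p + 1) x = derivWithin (G p) s x := congrFun iteratedDerivWithin_succ x
      rw [hstep']
      exact hdiff.hasDerivWithinAt
    exact h1.hasDerivAt (Icc_mem_nhds hx.1 hx.2)
  have hrice : ∀ i : ℕ, ((A + i + 1 : ℤ) : ℝ) = aseq (i + 1) := by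
    intro i; simp only [haseq]; push_cast; ring
  have hrice0 : ∀ i : ℕ, ((A + i + 1 : ℤ) : ℝ) - 1 = aseq i := by
    intro i; simp only [haseq]; push_cast; ring
  have hCF : ∀ i, ∀ p : ℕ, ∀ x ∈ Set.Ico (aseq i) (aseq (i + 1)),
      Cper p k a (x / k) = Fa k a (A + i + 1) p x := by
    intro i p x hx
    apply Cper_eq_Fa hk0
    · rw [hrice0 i]; exact hx.1
    · rw [hrice i]; exact hx.2
  have hIntFa : ∀ i, i < N → ∀ p : ℕ, p ≤ q → IntervalIntegrable
      (fun x => Fa k a (A + i + 1) p x * G p x) MeasureTheory.volume (aseq i) (aseq (i + 1)) := by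
    intro i hi p hp
    apply ContinuousOn.intervalIntegrable
    apply ContinuousOn.mul (continuous_Fa hk0 a _ p).continuousOn
    exact (hGcont p hp).mono (by rw [Set.uIcc_of_le (hle i)]; exact hIccsub i hi)
  have hIntC : ∀ i, i < N → ∀ p : ℕ, p ≤ q → IntervalIntegrable
      (fun x => Cper p k a (x / k) * G p x) MeasureTheory.volume (aseq i) (aseq (i + 1)) := by
    intro i hi p hp
    apply intervalIntegrable_congr_Ico (hle i) (fun x hx => by rw [hCF i p x hx])
      (hIntFa i hi p hp)
  have hsplit : ∀ p : ℕ, p ≤ q → (∫ x in (A : ℝ)..(B : ℝ), Cper p k a (x / k) * G p x)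
      = ∑ i ∈ Finset.range N, ∫ x in aseq i..aseq (i + 1), Cper p k a (x / k) * G p x := by
    intro p hp
    have h := intervalIntegral.sum_integral_adjacent_intervals
      (μ := MeasureTheory.volume) (f := fun x => Cper p k a (x / k) * G p x)
      (a := aseq) (n := N) (fun i hi => hIntC i hi p hp)
    rw [haseq0, haseqN] at h
    exact h.symm
  have hperiodB : ∀ p : ℕ, Cper p k a ((B : ℝ) / k) = Cnum p k a := by
    intro p
    obtain ⟨c, hc⟩ := hB
    have hq1 : (B : ℝ) / k = ((c : ℤ) : ℝ) := by rw [hc]; push_cast; field_simp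
    rw [hq1, Cper_int_eq]
    rfl
  have hperiodA : ∀ p : ℕ, Cper p k a ((A : ℝ) / k) = Cnum p k a := by
    intro p
    obtain ⟨c, hc⟩ := hA
    have hq1 : (A : ℝ) / k = ((c : ℤ) : ℝ) := by rw [hc]; push_cast; field_simp
    rw [hq1, Cper_int_eq]
    rfl
  have hFTC : ∀ i, i < N → (∫ x in aseq i..aseq (i + 1), G 1 x)
      = g (aseq (i + 1)) - g (aseq i) := by
    intro i hi
    apply intervalIntegral.integral_eq_sub_of_hasDeriv_right_of_le (hle i)
    · exact (hg.continuousOn).mono (hIccsub i hi)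
    · intro x hx
      have h := hGderiv 0 (by omega) x (hIoosub i hi hx)
      rw [hG0] at h
      exact h.hasDerivWithinAt
    · apply ContinuousOn.intervalIntegrable
      exact (hGcont 1 hq).mono (by rw [Set.uIcc_of_le (hle i)]; exact hIccsub i hi)
  have hbase_i : ∀ i, i < N → (∫ x in aseq i..aseq (i + 1), Cper 1 k a (x / k) * G 1 x)
      = Cper 1 k a (aseq i / k) * (g (aseq (i + 1)) - g (aseq i)) := by
    intro i hi
    have hconst : ∀ x ∈ Set.Ico (aseq i) (aseq (i + 1)),
        Cper 1 k a (x / k) * G 1 x = Cper 1 k a (aseq i / k) * G 1 x := by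
      intro x hx
      rw [hCF i 1 x hx, Fa_one_const hk hka _ x (aseq i),
        ← hCF i 1 (aseq i) ⟨le_refl _, hlt i⟩]
    rw [intervalIntegral_congr_Ico (hle i) hconst, intervalIntegral.integral_const_mul,
      hFTC i hi]
  have hjump : ∀ i : ℕ, Cper 1 k a (aseq (i + 1) / k)
      = Cper 1 k a (aseq i / k) - eterm k a (A + i + 1) := by
    intro i
    have h := Cper_one_jump hk hka (A + i + 1)
    rw [hrice i] at h
    rw [show ((A + i + 1 - 1 : ℤ) : ℝ) = aseq i by push_cast [haseq]; ring] at h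
    exact h
  have hbase : (∑ r ∈ Finset.Icc (A + 1) B, eterm k a r * g (r : ℝ))
      = (-(Cnum 1 k a)) * (g (B : ℝ) - g (A : ℝ))
        + ∫ x in (A : ℝ)..(B : ℝ), Cper 1 k a (x / k) * G 1 x := by
    have h1 : (∫ x in (A : ℝ)..(B : ℝ), Cper 1 k a (x / k) * G 1 x)
        = ∑ i ∈ Finset.range N, Cper 1 k a (aseq i / k) * (g (aseq (i + 1)) - g (aseq i)) := by
      rw [hsplit 1 hq]
      exact Finset.sum_congr rfl fun i hi => hbase_i i (Finset.mem_range.mp hi)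
    have h2 : ∑ i ∈ Finset.range N, Cper 1 k a (aseq i / k) * (g (aseq (i + 1)) - g (aseq i))
        = Cper 1 k a (aseq N / k) * g (aseq N) - Cper 1 k a (aseq 0 / k) * g (aseq 0)
          - ∑ i ∈ Finset.range N,
              (Cper 1 k a (aseq (i + 1) / k) - Cper 1 k a (aseq i / k)) * g (aseq (i + 1)) := by
      have h := abel_sum (fun i => Cper 1 k a (aseq i / k)) (fun i => g (aseq i)) N
      simpa using h
    have h3 : ∀ i ∈ Finset.range N,
        (Cper 1 k a (aseq (i + 1) / k) - Cper 1 k a (aseq i / k)) * g (aseq (i + 1))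
          = -(eterm k a (A + 1 + i) * g (aseq (i + 1))) := by
      intro i _
      rw [hjump i, show A + (i : ℤ) + 1 = A + 1 + i by ring]
      ring
    have h4 : Cper 1 k a (aseq N / k) = Cnum 1 k a := by rw [haseqN]; exact hperiodB 1
    have h5 : Cper 1 k a (aseq 0 / k) = Cnum 1 k a := by rw [haseq0]; exact hperiodA 1
    have h6 : (∑ r ∈ Finset.Icc (A + 1) B, eterm k a r * g (r : ℝ))
        = ∑ i ∈ Finset.range N, eterm k a (A + 1 + i) * g (aseq (i + 1)) := by
      have h7 := sum_Icc_int (fun r => eterm k a r * g (r : ℝ)) A N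
      rw [show A + (N : ℤ) = B by omega] at h7
      rw [h7]
      refine Finset.sum_congr rfl fun i _ => ?_
      rw [show ((A + 1 + i : ℤ) : ℝ) = aseq (i + 1) by push_cast [haseq]; ring]
    rw [h6, h1, h2, Finset.sum_congr rfl h3, Finset.sum_neg_distrib, h4, h5, haseqN, haseq0]
    ring
  have hstep : ∀ p : ℕ, 1 ≤ p → p < q →
      (∫ x in (A : ℝ)..(B : ℝ), Cper p k a (x / k) * G p x)
        = ((k : ℂ) / (p + 1)) * (Cnum (p + 1) k a * (G p (B : ℝ) - G p (A : ℝ)))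
          - ((k : ℂ) / (p + 1)) *
              ∫ x in (A : ℝ)..(B : ℝ), Cper (p + 1) k a (x / k) * G (p + 1) x := by
    intro p hp1 hpq
    have hp1C : ((p : ℂ) + 1) ≠ 0 := by intro h; exact_mod_cast h
    have hIBP : ∀ i, i < N →
        (∫ x in aseq i..aseq (i + 1), Cper p k a (x / k) * G p x)
          = ((k : ℂ) / (p + 1)) * (Cper (p + 1) k a (aseq (i + 1) / k) * G p (aseq (i + 1))
              - Cper (p + 1) k a (aseq i / k) * G p (aseq i))
            - ((k : ℂ) / (p + 1)) *
                ∫ x in aseq i..aseq (i + 1), Cper (p + 1) k a (x / k) * G (p + 1) x := by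
      intro i hi
      set r : ℤ := A + i + 1 with hrdef
      have hu' : ∀ x : ℝ, HasDerivAt (fun y => ((k : ℂ) / (p + 1)) * Fa k a r (p + 1) y)
          (Fa k a r p x) x := by
        intro x
        have h := (hasDerivAt_Fa hk0 a r (p + 1) x).const_mul ((k : ℂ) / ((p : ℂ) + 1))
        have heq : ((k : ℂ) / ((p : ℂ) + 1)) * ((((p + 1 : ℕ) : ℂ)) / k * Fa k a r ((p + 1) - 1) x)
            = Fa k a r p x := by
          simp only [Nat.add_sub_cancel]
          push_cast
          field_simp
        rw [heq] at h
        exact h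
      have huIcc : Set.uIcc (aseq i) (aseq (i + 1)) ⊆ s := by
        rw [Set.uIcc_of_le (hle i)]; exact hIccsub i hi
      have hmm : Set.Ioo (min (aseq i) (aseq (i + 1))) (max (aseq i) (aseq (i + 1)))
          = Set.Ioo (aseq i) (aseq (i + 1)) := by
        rw [min_eq_left (hle i), max_eq_right (hle i)]
      have hparts : (∫ x in aseq i..aseq (i + 1),
            (Fa k a r p x * G p x + ((k : ℂ) / (p + 1)) * Fa k a r (p + 1) x * G (p + 1) x))
          = ((k : ℂ) / (p + 1)) * Fa k a r (p + 1) (aseq (i + 1)) * G p (aseq (i + 1))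
            - ((k : ℂ) / (p + 1)) * Fa k a r (p + 1) (aseq i) * G p (aseq i) := by
        have h := intervalIntegral.integral_deriv_mul_eq_sub_of_hasDerivAt
          (u := fun y => ((k : ℂ) / (p + 1)) * Fa k a r (p + 1) y) (v := G p)
          (u' := fun y => Fa k a r p y) (v' := G (p + 1))
          ((continuous_const.mul (continuous_Fa hk0 a r (p + 1))).continuousOn)
          ((hGcont p hpq.le).mono huIcc)
          (fun x _ => hu' x)
          (fun x hx => hGderiv p hpq x (hIoosub i hi (hmm ▸ hx)))
          ((continuous_Fa hk0 a r p).intervalIntegrable _ _)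
          (ContinuousOn.intervalIntegrable ((hGcont (p + 1) (by omega)).mono huIcc))
        convert h using 2 <;> ring
      have hint1 := hIntFa i hi p hpq.le
      have hint2 : IntervalIntegrable
          (fun x => ((k : ℂ) / (p + 1)) * Fa k a r (p + 1) x * G (p + 1) x)
          MeasureTheory.volume (aseq i) (aseq (i + 1)) := by
        apply ContinuousOn.intervalIntegrable
        exact ((continuous_const.mul (continuous_Fa hk0 a r (p + 1))).continuousOn.mul
          ((hGcont (p + 1) (by omega)).mono huIcc))
      rw [intervalIntegral.integral_add hint1 hint2] at hparts
      have hc2 : (∫ x in aseq i..aseq (i + 1),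
            ((k : ℂ) / (p + 1)) * Fa k a r (p + 1) x * G (p + 1) x)
          = ((k : ℂ) / (p + 1)) *
              ∫ x in aseq i..aseq (i + 1), Fa k a r (p + 1) x * G (p + 1) x := by
        rw [← intervalIntegral.integral_const_mul]
        congr 1
        funext x
        ring
      rw [hc2] at hparts
      have hrep1 : (∫ x in aseq i..aseq (i + 1), Cper p k a (x / k) * G p x)
          = ∫ x in aseq i..aseq (i + 1), Fa k a r p x * G p x :=
        intervalIntegral_congr_Ico (hle i) (fun x hx => by rw [hCF i p x hx])
      have hrep2 : (∫ x in aseq i..aseq (i + 1), Cper (p + 1) k a (x / k) * G (p + 1) x)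
          = ∫ x in aseq i..aseq (i + 1), Fa k a r (p + 1) x * G (p + 1) x :=
        intervalIntegral_congr_Ico (hle i) (fun x hx => by rw [hCF i (p + 1) x hx])
      have hbd1 : Fa k a r (p + 1) (aseq (i + 1)) = Cper (p + 1) k a (aseq (i + 1) / k) := by
        rw [← hrice i]
        exact (Cper_eq_Fa_right hk0 a r (p + 1) (by omega)).symm
      have hbd0 : Fa k a r (p + 1) (aseq i) = Cper (p + 1) k a (aseq i / k) :=
        (hCF i (p + 1) (aseq i) ⟨le_refl _, hlt i⟩).symm
      rw [hbd1, hbd0] at hparts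
      rw [hrep1, hrep2]
      linear_combination hparts
    rw [hsplit p hpq.le, hsplit (p + 1) (by omega),
      Finset.sum_congr rfl (fun i hi => hIBP i (Finset.mem_range.mp hi)),
      Finset.sum_sub_distrib]
    have htel : (∑ i ∈ Finset.range N, ((k : ℂ) / (p + 1)) *
          (Cper (p + 1) k a (aseq (i + 1) / k) * G p (aseq (i + 1))
            - Cper (p + 1) k a (aseq i / k) * G p (aseq i)))
        = ((k : ℂ) / (p + 1)) *
            (Cnum (p + 1) k a * G p (B : ℝ) - Cnum (p + 1) k a * G p (A : ℝ)) := by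
      rw [← Finset.mul_sum]
      congr 1
      have h : (∑ i ∈ Finset.range N,
            (Cper (p + 1) k a (aseq (i + 1) / k) * G p (aseq (i + 1))
              - Cper (p + 1) k a (aseq i / k) * G p (aseq i)))
          = Cper (p + 1) k a (aseq N / k) * G p (aseq N)
            - Cper (p + 1) k a (aseq 0 / k) * G p (aseq 0) := by
        have h' := Finset.sum_range_sub (fun i => Cper (p + 1) k a (aseq i / k) * G p (aseq i)) N
        simpa using h'
      rw [h, haseqN, haseq0, hperiodB (p + 1), hperiodA (p + 1)]
    have hsum2 : (∑ i ∈ Finset.range N, ((k : ℂ) / (p + 1)) *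
          ∫ x in aseq i..aseq (i + 1), Cper (p + 1) k a (x / k) * G (p + 1) x)
        = ((k : ℂ) / (p + 1)) *
            ∑ i ∈ Finset.range N,
              ∫ x in aseq i..aseq (i + 1), Cper (p + 1) k a (x / k) * G (p + 1) x :=
      (Finset.mul_sum _ _ _).symm
    rw [htel, hsum2]
    ring
  have hmain : ∀ p : ℕ, 1 ≤ p → p ≤ q →
      (∑ r ∈ Finset.Icc (A + 1) B, eterm k a r * g (r : ℝ))
        = (∑ l ∈ Finset.Icc 1 p,
            ((-1 : ℂ) ^ l * Cnum l k a * (k : ℂ) ^ (l - 1) / (l.factorial : ℂ)) *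
              (G (l - 1) (B : ℝ) - G (l - 1) (A : ℝ)))
          + ((-1 : ℂ) ^ (p + 1) * (k : ℂ) ^ (p - 1) / (p.factorial : ℂ)) *
            ∫ x in (A : ℝ)..(B : ℝ), Cper p k a (x / k) * G p x := by
    intro p hp1
    induction p, hp1 using Nat.le_induction with
    | base =>
      intro _
      rw [hbase]
      simp only [Finset.Icc_self, Finset.sum_singleton, hG0, pow_one, Nat.factorial_one,
        Nat.sub_self, pow_zero, Nat.cast_one]
      ring
    | succ p hp ih =>
      intro hpq
      rw [ih (by omega), hstep p hp (by omega),
        Finset.sum_Icc_succ_top (by omega : 1 ≤ p + 1)]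
      obtain ⟨j, rfl⟩ : ∃ j, p = j + 1 := ⟨p - 1, by omega⟩
      simp only [Nat.add_sub_cancel]
      have hfac : (((j + 1 + 1).factorial : ℕ) : ℂ)
          = ((j + 1 + 1 : ℕ) : ℂ) * (((j + 1).factorial : ℕ) : ℂ) := by
        exact_mod_cast congrArg (fun t : ℕ => (t : ℂ)) (Nat.factorial_succ (j + 1))
      have hfpne : (((j + 1).factorial : ℕ) : ℂ) ≠ 0 := Nat.cast_ne_zero.mpr (Nat.factorial_ne_zero _)
      have hj2 : ((j : ℂ) + 1 + 1) ≠ 0 := by intro h; exact_mod_cast h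
      rw [hfac]
      push_cast
      field_simp
      ring
  exact hmain q hq le_rfl
/-- Theorem 2, second form:
`∑_{r=mk+1}^{nk} e^{2πiar/k} g(r)
  = ∑_{l=1}^{q} ((−1)^l C_{l,k}(a) k^{l−1}/l!)·[g^{(l−1)}(kn) − g^{(l−1)}(km)]
    + ((−1)^{q+1} k^{q−1}/q!) ∫_{km}^{kn} C̃_{q,k}(x/k;a) g^{(q)}(x) dx`. -/
theorem statement7 (k : ℕ) (hk : 2 ≤ k) (a : ℤ) (hka : ¬ (k : ℤ) ∣ a)
    (m n : ℤ) (hmn : m < n) (q : ℕ) (hq : 1 ≤ q)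
    (g : ℝ → ℂ) (hg : ContDiffOn ℝ q g (Set.Icc ((m * k : ℤ) : ℝ) ((n * k : ℤ) : ℝ))) :
    (∑ r ∈ Finset.Icc (m * k + 1) (n * k),
        Complex.exp (2 * (Real.pi : ℂ) * Complex.I * a * r / k) * g (r : ℝ)) =
      (∑ l ∈ Finset.Icc 1 q,
          ((-1 : ℂ) ^ l * Cnum l k a * (k : ℂ) ^ (l - 1) / (l.factorial : ℂ)) *
            (iteratedDerivWithin (l - 1) g (Set.Icc ((m * k : ℤ) : ℝ) ((n * k : ℤ) : ℝ))
                ((n * k : ℤ) : ℝ) -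
              iteratedDerivWithin (l - 1) g (Set.Icc ((m * k : ℤ) : ℝ) ((n * k : ℤ) : ℝ))
                ((m * k : ℤ) : ℝ))) +
        ((-1 : ℂ) ^ (q + 1) * (k : ℂ) ^ (q - 1) / (q.factorial : ℂ)) *
          ∫ x in ((m * k : ℤ) : ℝ)..((n * k : ℤ) : ℝ),
            Cper q k a (x / k) *
              iteratedDerivWithin q g (Set.Icc ((m * k : ℤ) : ℝ) ((n * k : ℤ) : ℝ)) x := by
  have hkz : (0 : ℤ) < (k : ℤ) := by exact_mod_cast (by omega : 0 < k)
  have hAB : m * (k : ℤ) < n * k := mul_lt_mul_of_pos_right hmn hkz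
  have h := aux_main k hk a hka (m * k) (n * k) hAB ⟨m, mul_comm _ _⟩ ⟨n, mul_comm _ _⟩
    q hq g hg
  simp only [eterm] at h
  exact h
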